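/- Let μ : C → D be a modelization functor between J-categories. Then for any morphism p : E → B in C, secat(μ(p)) ≤ secat(p). -/

import Mathlib

open CategoryTheory CategoryTheory.Limits ZeroObject

universe v u v' u'

variable (C : Type u) [Category.{v} C] [HasZeroObject C] [HasZeroMorphisms C]

/-- A category satisfying axioms (J1)-(J4) of Doeraene's J-categories:
a pointed category with fibrations, cofibrations and weak equivalences. -/
structure PreJCat where
  fib : MorphismProperty C
  cofib : MorphismProperty C
  weq : MorphismProperty C
  /-- (J1) isomorphisms are trivial cofibrations -/
  iso_triv_cofib : ∀ {X Y : C} (f : X ⟶ Y), IsIso f → cofib f ∧ weq f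
  /-- (J1) isomorphisms are trivial fibrations -/
  iso_triv_fib : ∀ {X Y : C} (f : X ⟶ Y), IsIso f → fib f ∧ weq f
  fib_comp : ∀ {X Y Z : C} {f : X ⟶ Y} {g : Y ⟶ Z}, fib f → fib g → fib (f ≫ g)
  cofib_comp : ∀ {X Y Z : C} {f : X ⟶ Y} {g : Y ⟶ Z}, cofib f → cofib g → cofib (f ≫ g)
  /-- (J1) two-out-of-three for weak equivalences -/
  weq_comp : ∀ {X Y Z : C} {f : X ⟶ Y} {g : Y ⟶ Z}, weq f → weq g → weq (f ≫ g)
  weq_of_comp_left : ∀ {X Y Z : C} {f : X ⟶ Y} {g : Y ⟶ Z}, weq g → weq (f ≫ g) → weq f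
  weq_of_comp_right : ∀ {X Y Z : C} {f : X ⟶ Y} {g : Y ⟶ Z}, weq f → weq (f ≫ g) → weq g
  /-- (J2) pullbacks of fibrations exist, and the base extension is a fibration -/
  pb_exists : ∀ {E B B' : C} (p : E ⟶ B) (f : B' ⟶ B), fib p →
    ∃ (P : C) (fb : P ⟶ E) (pb : P ⟶ B'), IsPullback fb pb p f ∧ fib pb
  /-- (J2) base extensions of weak equivalences along fibrations are weak equivalences -/
  pb_weq : ∀ {E B B' P : C} {p : E ⟶ B} {f : B' ⟶ B} {fb : P ⟶ E} {pb : P ⟶ B'},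
    fib p → IsPullback fb pb p f → (weq f → weq fb) ∧ (weq p → weq pb)
  /-- (J2) dual: pushouts of cofibrations exist -/
  po_exists : ∀ {A X Y : C} (i : A ⟶ X) (g : A ⟶ Y), cofib i →
    ∃ (Q : C) (inl : X ⟶ Q) (inr : Y ⟶ Q), IsPushout i g inl inr ∧ cofib inr
  po_weq : ∀ {A X Y Q : C} {i : A ⟶ X} {g : A ⟶ Y} {inl : X ⟶ Q} {inr : Y ⟶ Q},
    cofib i → IsPushout i g inl inr → (weq g → weq inl) ∧ (weq i → weq inr)
  /-- (J3) F-factorizations exist -/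
  F_fac : ∀ {X Y : C} (f : X ⟶ Y), ∃ (Z : C) (τ : X ⟶ Z) (q : Z ⟶ Y),
    weq τ ∧ fib q ∧ τ ≫ q = f
  /-- (J3) C-factorizations exist -/
  C_fac : ∀ {X Y : C} (f : X ⟶ Y), ∃ (Z : C) (i : X ⟶ Z) (σ : Z ⟶ Y),
    cofib i ∧ weq σ ∧ i ≫ σ = f
  /-- (J4) cofibrant replacements exist -/
  cof_replace : ∀ X : C, ∃ (Xb : C) (q : Xb ⟶ X), fib q ∧ weq q ∧
    (∀ {E : C} (p : E ⟶ Xb), fib p → weq p → ∃ s : Xb ⟶ E, s ≫ p = 𝟙 Xb)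

variable {C}

namespace PreJCat

/-- An object is a cofibrant model if every trivial fibration onto it admits a section. -/
def CofModel (P : PreJCat C) (X : C) : Prop :=
  ∀ {E : C} (p : E ⟶ X), P.fib p → P.weq p → ∃ s : X ⟶ E, s ≫ p = 𝟙 X

/-- An object is e-fibrant if the morphism to the zero object is a fibration. -/
def EFibrant (P : PreJCat C) (X : C) : Prop := P.fib (0 : X ⟶ 0)

/-- `f` admits a weak lifting along `g` (all objects being cofibrant models). -/
def WeakLifting (P : PreJCat C) {A B Cc : C} (f : A ⟶ B) (g : Cc ⟶ B) : Prop :=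
  ∃ (E : C) (τ : Cc ⟶ E) (q : E ⟶ B), P.weq τ ∧ P.fib q ∧ τ ≫ q = g ∧
    ∃ s : A ⟶ E, s ≫ q = f

/-- `g` admits a weak section. -/
def HasWeakSection (P : PreJCat C) {E B : C} (g : E ⟶ B) : Prop :=
  P.WeakLifting (𝟙 B) g

/-- `j : J ⟶ B` is a join morphism of `f : A ⟶ B` and `g : Cc ⟶ B`: built from an
F-factorization of `g`, a pullback, a C-factorization and a pushout. -/
def IsJoin (P : PreJCat C) {A Cc B J : C} (f : A ⟶ B) (g : Cc ⟶ B) (j : J ⟶ B) : Prop :=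
  ∃ (E : C) (τ : Cc ⟶ E) (q : E ⟶ B), P.weq τ ∧ P.fib q ∧ τ ≫ q = g ∧
  ∃ (E' Z : C) (fbar : E' ⟶ E) (pbar : E' ⟶ A) (i : E' ⟶ Z) (σ : Z ⟶ E)
    (a : A ⟶ J) (bz : Z ⟶ J),
    IsPullback fbar pbar q f ∧ P.cofib i ∧ P.weq σ ∧ i ≫ σ = fbar ∧
    IsPushout pbar i a bz ∧ a ≫ j = f ∧ bz ≫ j = σ ≫ q

/-- `IsIterJoin P p n h` : `h` is an `n`-th iterated join morphism `*ⁿ_B E ⟶ B` of `p`. -/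
inductive IsIterJoin (P : PreJCat C) {E B : C} (p : E ⟶ B) : ℕ → ∀ {X : C}, (X ⟶ B) → Prop
  | zero : IsIterJoin P p 0 p
  | succ {n : ℕ} {X Y : C} {h : X ⟶ B} {h' : Y ⟶ B} :
      IsIterJoin P p n h → P.IsJoin h p h' → IsIterJoin P p (n + 1) h'

/-- The Ganea-type sectional category of a morphism. -/
noncomputable def Gsecat (P : PreJCat C) {E B : C} (p : E ⟶ B) : ℕ∞ :=
  sInf {n : ℕ∞ | ∃ m : ℕ, n = (m : ℕ∞) ∧
    ∃ (X : C) (h : X ⟶ B), P.IsIterJoin p m h ∧ P.HasWeakSection h}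

end PreJCat

/-- `p1, p2` exhibit `Pd` as a binary product of `X` and `Y`. -/
def IsBinProd {X Y Pd : C} (p1 : Pd ⟶ X) (p2 : Pd ⟶ Y) : Prop :=
  Nonempty (IsLimit (BinaryFan.mk p1 p2))

namespace PreJCat

/-- `IsFatWedge P p n j Δ` : `j : Tⁿ(p) ⟶ B^{n+1}` is an `n`-th fat wedge morphism of `p`
together with the diagonal `Δ : B ⟶ B^{n+1}`. -/
inductive IsFatWedge (P : PreJCat C) {E B : C} (p : E ⟶ B) :
    ℕ → ∀ {T Pw : C}, (T ⟶ Pw) → (B ⟶ Pw) → Prop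
  | zero : IsFatWedge P p 0 p (𝟙 B)
  | succ {n : ℕ} {T Pn : C} {j : T ⟶ Pn} {Δ : B ⟶ Pn}
      (hprev : IsFatWedge P p n j Δ)
      {Pn1 : C} {pr1 : Pn1 ⟶ Pn} {pr2 : Pn1 ⟶ B} (hP : IsBinProd pr1 pr2)
      {TB : C} {q1 : TB ⟶ T} {q2 : TB ⟶ B} (hTB : IsBinProd q1 q2)
      {PE : C} {r1 : PE ⟶ Pn} {r2 : PE ⟶ E} (hPE : IsBinProd r1 r2)
      {jB : TB ⟶ Pn1} (hjB : jB ≫ pr1 = q1 ≫ j ∧ jB ≫ pr2 = q2)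
      {pP : PE ⟶ Pn1} (hpP : pP ≫ pr1 = r1 ∧ pP ≫ pr2 = r2 ≫ p)
      {Tn1 : C} {j' : Tn1 ⟶ Pn1} (hjoin : P.IsJoin jB pP j')
      {Δ' : B ⟶ Pn1} (hΔ : Δ' ≫ pr1 = Δ ∧ Δ' ≫ pr2 = 𝟙 B) :
      IsFatWedge P p (n + 1) j' Δ'

/-- The Whitehead-type sectional category of a morphism with e-fibrant codomain. -/
noncomputable def WsecatE (P : PreJCat C) {E B : C} (p : E ⟶ B) : ℕ∞ :=
  sInf {n : ℕ∞ | ∃ m : ℕ, n = (m : ℕ∞) ∧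
    ∃ (T Pw : C) (j : T ⟶ Pw) (Δ : B ⟶ Pw), P.IsFatWedge p m j Δ ∧ P.WeakLifting Δ j}

/-- The Whitehead-type sectional category of an arbitrary morphism, via e-fibrant
replacements of the codomain. -/
noncomputable def Wsecat (P : PreJCat C) {E B : C} (p : E ⟶ B) : ℕ∞ :=
  ⨅ (F : C) (τ : B ⟶ F) (_ : P.weq τ ∧ P.EFibrant F), P.WsecatE (p ≫ τ)

/-- A commutative square is a homotopy pullback. -/
def IsHPB (P : PreJCat C) {D A Cc B : C} (f' : D ⟶ Cc) (g' : D ⟶ A)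
    (g : Cc ⟶ B) (f : A ⟶ B) : Prop :=
  f' ≫ g = g' ≫ f ∧ ∃ (E : C) (τ : Cc ⟶ E) (q : E ⟶ B), P.weq τ ∧ P.fib q ∧ τ ≫ q = g ∧
    ∃ (Pt : C) (pr1 : Pt ⟶ E) (pr2 : Pt ⟶ A), IsPullback pr1 pr2 q f ∧
      ∃ w : D ⟶ Pt, P.weq w ∧ w ≫ pr1 = f' ≫ τ ∧ w ≫ pr2 = g'

/-- A commutative square is a homotopy pushout. -/
def IsHPO (P : PreJCat C) {A B Cc D : C} (f : A ⟶ B) (g : A ⟶ Cc)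
    (i' : B ⟶ D) (j' : Cc ⟶ D) : Prop :=
  f ≫ i' = g ≫ j' ∧ ∃ (Z : C) (i : A ⟶ Z) (σ : Z ⟶ B), P.cofib i ∧ P.weq σ ∧ i ≫ σ = f ∧
    ∃ (Q : C) (inl : Z ⟶ Q) (inr : Cc ⟶ Q), IsPushout i g inl inr ∧
      ∃ w : Q ⟶ D, P.weq w ∧ inl ≫ w = σ ≫ i' ∧ inr ≫ w = j'

/-- `A-A'-B'-B` is a weak pullback over `b : B ⟶ B'` (all objects cofibrant models). -/
def IsWeakPullback (P : PreJCat C) {A B A' B' : C}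
    (f : A ⟶ B) (f' : A' ⟶ B') (b : B ⟶ B') : Prop :=
  ∃ (X : C) (τ : A' ⟶ X) (q : X ⟶ B'), P.weq τ ∧ P.fib q ∧ τ ≫ q = f' ∧
    ∃ x : A ⟶ X, P.IsHPB x f q b

/-- `g : G ⟶ B` is an `n`-th Ganea map of `B`: the `n`-th iterated join of `0 ⟶ B`. -/
def IsGaneaMap (P : PreJCat C) (B : C) (n : ℕ) {G : C} (g : G ⟶ B) : Prop :=
  P.IsIterJoin (0 : (0 : C) ⟶ B) n g

/-- The Lusternik-Schnirelmann category of an object. -/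
noncomputable def catObj (P : PreJCat C) (B : C) : ℕ∞ :=
  sInf {n : ℕ∞ | ∃ m : ℕ, n = (m : ℕ∞) ∧
    ∃ (G : C) (g : G ⟶ B), P.IsGaneaMap B m g ∧ P.HasWeakSection g}

/-- The Lusternik-Schnirelmann category of a morphism `b : B ⟶ B'`:
least `n` such that `b` admits a weak lifting along the `n`-th Ganea map of `B'`. -/
noncomputable def catMor (P : PreJCat C) {B B' : C} (b : B ⟶ B') : ℕ∞ :=
  sInf {n : ℕ∞ | ∃ m : ℕ, n = (m : ℕ∞) ∧
    ∃ (G : C) (g : G ⟶ B'), P.IsGaneaMap B' m g ∧ P.WeakLifting b g}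

/-- One step of a zigzag: a weak equivalence of morphisms in the arrow category. -/
def MorWeqStep (P : PreJCat C) (u v : Arrow C) : Prop :=
  ∃ h : u ⟶ v, P.weq h.left ∧ P.weq h.right

/-- Two morphisms are weakly equivalent: joined by a finite zigzag of weak
equivalences of morphisms. -/
def WeaklyEquivMor (P : PreJCat C) (u v : Arrow C) : Prop :=
  Relation.EqvGen P.MorWeqStep u v

def ObjWeqStep (P : PreJCat C) (X Y : C) : Prop := ∃ f : X ⟶ Y, P.weq f

/-- Two objects are weakly equivalent: joined by a finite zigzag of weak equivalences. -/
def WeaklyEquivObj (P : PreJCat C) (X Y : C) : Prop :=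
  Relation.EqvGen P.ObjWeqStep X Y

/-- The abstract topological complexity of an e-fibrant object:
the sectional category of the diagonal `B ⟶ B × B`. -/
noncomputable def TCE (P : PreJCat C) (B : C) : ℕ∞ :=
  ⨅ (Pd : C) (p1 : Pd ⟶ B) (p2 : Pd ⟶ B) (_ : IsBinProd p1 p2)
    (Δ : B ⟶ Pd) (_ : Δ ≫ p1 = 𝟙 B ∧ Δ ≫ p2 = 𝟙 B), P.Gsecat Δ

/-- The abstract topological complexity of an arbitrary object, via e-fibrant
replacements. -/
noncomputable def TC (P : PreJCat C) (B : C) : ℕ∞ :=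
  ⨅ (F : C) (τ : B ⟶ F) (_ : P.weq τ ∧ P.EFibrant F), P.TCE F

end PreJCat

variable (C)

/-- A J-category: (J1)-(J4) together with the cube axiom (J5). -/
structure JCat extends PreJCat C where
  /-- (J5) the cube axiom: in a commutative cube whose bottom face is a homotopy
  pushout and whose vertical faces are homotopy pullbacks, the top face is a
  homotopy pushout. -/
  cube : ∀ {X00 X01 X10 X11 Y00 Y01 Y10 Y11 : C}
    {tf : X00 ⟶ X01} {tg : X00 ⟶ X10} {ti : X01 ⟶ X11} {tj : X10 ⟶ X11}
    {bf : Y00 ⟶ Y01} {bg : Y00 ⟶ Y10} {bi : Y01 ⟶ Y11} {bj : Y10 ⟶ Y11}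
    {v00 : X00 ⟶ Y00} {v01 : X01 ⟶ Y01} {v10 : X10 ⟶ Y10} {v11 : X11 ⟶ Y11},
    tf ≫ ti = tg ≫ tj →
    toPreJCat.IsHPO bf bg bi bj →
    toPreJCat.IsHPB tf v00 v01 bf →
    toPreJCat.IsHPB tg v00 v10 bg →
    toPreJCat.IsHPB ti v01 v11 bi →
    toPreJCat.IsHPB tj v10 v11 bj →
    toPreJCat.IsHPO tf tg ti tj

variable {C}

/-- A modelization functor: preserves weak equivalences, homotopy pullbacks and
homotopy pushouts. -/
structure ModelizationFunctor {D : Type u'} [Category.{v'} D] [HasZeroObject D]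
    [HasZeroMorphisms D] (P : PreJCat C) (Q : PreJCat D) where
  F : C ⥤ D
  map_weq : ∀ {X Y : C} (f : X ⟶ Y), P.weq f → Q.weq (F.map f)
  map_hpb : ∀ {Dd A Cc B : C} {f' : Dd ⟶ Cc} {g' : Dd ⟶ A} {g : Cc ⟶ B} {f : A ⟶ B},
    P.IsHPB f' g' g f → Q.IsHPB (F.map f') (F.map g') (F.map g) (F.map f)
  map_hpo : ∀ {A B Cc Dd : C} {f : A ⟶ B} {g : A ⟶ Cc} {i' : B ⟶ Dd} {j' : Cc ⟶ Dd},
    P.IsHPO f g i' j' → Q.IsHPO (F.map f) (F.map g) (F.map i') (F.map j')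

/-!
A join of `h` and `p` is a pullback along a fibration followed by a pushout along a cofibration.
A modelization functor `μ` turns these into a homotopy pullback and a homotopy pushout, so `μ` of
the join is weakly equivalent over `μ B` to a genuine join of `μ h` and `μ p`. By the gluing lemma
(pushouts along cofibrations are invariant under weak equivalences of spans, proved by zigzags
through pushouts along trivial cofibrations), a join depends on its first argument only up to weak
equivalence over the base. Hence, by induction, `μ` of an `n`-fold iterated join of `p` is weakly
equivalent over `μ B` to an `n`-fold iterated join of `μ p`. Finally `μ` preserves weak sections,
and since every object of the target is a cofibrant model, having a weak section is invariant
under weak equivalence over the base.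
-/

set_option linter.unusedSectionVars false

namespace PreJCat

variable (K : PreJCat C)

lemma weq_id (X : C) : K.weq (𝟙 X) := (K.iso_triv_fib (𝟙 X) inferInstance).2

variable {K}

lemma fib_of_isPullback {P E B B' : C} {p : E ⟶ B} {f : B' ⟶ B} {fb : P ⟶ E} {pb : P ⟶ B'}
    (hp : K.fib p) (h : IsPullback fb pb p f) : K.fib pb := by
  obtain ⟨P₀, fb₀, pb₀, h₀, hf₀⟩ := K.pb_exists p f hp
  rw [← IsPullback.isoIsPullback_hom_snd _ _ h h₀]
  exact K.fib_comp (K.iso_triv_fib _ inferInstance).1 hf₀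

lemma cofib_inr_of_isPushout {A X Y Q : C} {i : A ⟶ X} {g : A ⟶ Y} {inl : X ⟶ Q}
    {inr : Y ⟶ Q} (hi : K.cofib i) (h : IsPushout i g inl inr) : K.cofib inr := by
  obtain ⟨Q₀, inl₀, inr₀, h₀, hc₀⟩ := K.po_exists i g hi
  rw [← IsPushout.inr_isoIsPushout_hom _ _ h₀ h]
  exact K.cofib_comp hc₀ (K.iso_triv_cofib _ inferInstance).1

lemma cofib_inl_of_isPushout {A X Y Q : C} {i : A ⟶ X} {g : A ⟶ Y} {inl : X ⟶ Q}
    {inr : Y ⟶ Q} (hg : K.cofib g) (h : IsPushout i g inl inr) : K.cofib inl :=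
  cofib_inr_of_isPushout hg h.flip

lemma isHPB_of_isPullback {P A E B : C} {fb : P ⟶ E} {pb : P ⟶ A} {q : E ⟶ B} {f : A ⟶ B}
    (hq : K.fib q) (h : IsPullback fb pb q f) : K.IsHPB fb pb q f :=
  ⟨h.w, E, 𝟙 E, q, K.weq_id E, hq, Category.id_comp q, P, fb, pb, h, 𝟙 P, K.weq_id P,
    by simp, Category.id_comp pb⟩

lemma isHPO_of_isPushout {A X Y Q : C} {i : A ⟶ X} {g : A ⟶ Y} {inl : X ⟶ Q} {inr : Y ⟶ Q}
    (hi : K.cofib i) (h : IsPushout i g inl inr) : K.IsHPO i g inl inr :=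
  ⟨h.w, X, i, 𝟙 X, hi, K.weq_id X, Category.comp_id i, Q, inl, inr, h, 𝟙 Q, K.weq_id Q,
    by simp, Category.comp_id inr⟩

variable (K)

def WeqOver {B : C} (u v : Over B) : Prop :=
  ∃ e : u.left ⟶ v.left, K.weq e ∧ e ≫ v.hom = u.hom

def WeaklyEquivOver {B : C} : Over B → Over B → Prop :=
  Relation.EqvGen K.WeqOver

variable {K}

lemma HasWeakSection.of_comp (hd : ∀ X : C, K.CofModel X) {U V B : C} {e : U ⟶ V}
    {v : V ⟶ B} (h : K.HasWeakSection (e ≫ v)) : K.HasWeakSection v := by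
  obtain ⟨Eu, τ, qu, hτ, hqu, hτq, s, hs⟩ := h
  obtain ⟨Ev, τ', q', hτ', hq', hτq'⟩ := K.F_fac v
  obtain ⟨P, fb, pb, hP, hpb⟩ := K.pb_exists q' qu hq'
  set ξ : U ⟶ P := hP.lift (e ≫ τ') τ (by rw [Category.assoc, hτq', hτq])
  obtain ⟨P₁, τ₁, q₁, hτ₁, hq₁, hτq₁⟩ := K.F_fac ξ
  -- `q₁ ≫ pb` is a trivial fibration onto the cofibrant model `Eu`, so it has a section
  have hweq : K.weq (q₁ ≫ pb) := K.weq_of_comp_right hτ₁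
    (by rw [← Category.assoc, hτq₁, hP.lift_snd]; exact hτ)
  obtain ⟨t, ht⟩ := hd Eu (q₁ ≫ pb) (K.fib_comp hq₁ hpb) hweq
  refine ⟨Ev, τ', q', hτ', hq', hτq', s ≫ t ≫ q₁ ≫ fb, ?_⟩
  simp only [Category.assoc, hP.w]
  rw [← Category.assoc q₁, ← Category.assoc t, ht, Category.id_comp, hs]

lemma HasWeakSection.comp_of_weq (hd : ∀ X : C, K.CofModel X) {U V B : C} {e : U ⟶ V}
    (he : K.weq e) {v : V ⟶ B} (h : K.HasWeakSection v) : K.HasWeakSection (e ≫ v) := by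
  obtain ⟨Ev, τ, q, hτ, hq, hτq, s, hs⟩ := h
  obtain ⟨Eu, τ', q', hτ', hq', hτq'⟩ := K.F_fac (e ≫ τ)
  have hq'w : K.weq q' := K.weq_of_comp_right hτ' (by rw [hτq']; exact K.weq_comp he hτ)
  obtain ⟨t, ht⟩ := hd Ev q' hq' hq'w
  refine ⟨Eu, τ', q' ≫ q, hτ', K.fib_comp hq' hq, ?_, s ≫ t, ?_⟩
  · rw [← Category.assoc, hτq', Category.assoc, hτq]
  · rw [Category.assoc, ← Category.assoc t, ht, Category.id_comp, hs]

lemma hasWeakSection_iff_of_weaklyEquivOver (hd : ∀ X : C, K.CofModel X) {B : C}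
    {u v : Over B} (h : K.WeaklyEquivOver u v) :
    K.HasWeakSection u.hom ↔ K.HasWeakSection v.hom := by
  induction h with
  | rel u v huv =>
      obtain ⟨e, he, hev⟩ := huv
      rw [← hev]
      exact ⟨HasWeakSection.of_comp hd, HasWeakSection.comp_of_weq hd he⟩
  | refl => exact Iff.rfl
  | symm _ _ _ ih => exact ih.symm
  | trans _ _ _ _ _ ih₁ ih₂ => exact ih₁.trans ih₂

lemma weqOver_of_isPushout_comp {B N X Z M Q Q' : C} {g : N ⟶ X} {i : N ⟶ Z} {t : Z ⟶ M}
    (htc : K.cofib t) (htw : K.weq t) {a : X ⟶ Q} {b : Z ⟶ Q} (hQ : IsPushout g i a b)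
    {a' : X ⟶ Q'} {b' : M ⟶ Q'} (hQ' : IsPushout g (i ≫ t) a' b')
    {u : Q ⟶ B} {u' : Q' ⟶ B} (ha : a ≫ u = a' ≫ u') (hb : b ≫ u = t ≫ b' ≫ u') :
    K.WeqOver (Over.mk u) (Over.mk u') := by
  set χ : Q ⟶ Q' := hQ.desc a' (t ≫ b') (by rw [hQ'.w, Category.assoc])
  have hχ : IsPushout b t χ b' :=
    IsPushout.of_top (by rwa [hQ.inl_desc]) (hQ.inr_desc _ _ _) hQ
  refine ⟨χ, (K.po_weq htc hχ.flip).2 htw, (?_ : χ ≫ u' = u)⟩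
  apply hQ.hom_ext
  · rw [← Category.assoc, hQ.inl_desc, ha]
  · rw [← Category.assoc, hQ.inr_desc, hb, Category.assoc]

lemma weaklyEquivOver_of_isPushout_of_factorizations {B N X Z₁ Z₂ W Q₁ Q₂ : C} {g : N ⟶ X}
    {i₁ : N ⟶ Z₁} (hi₁ : K.cofib i₁) {i₂ : N ⟶ Z₂} (hi₂ : K.cofib i₂)
    {σ₁ : Z₁ ⟶ W} (hσ₁ : K.weq σ₁) {σ₂ : Z₂ ⟶ W} (hσ₂ : K.weq σ₂) (hc : i₁ ≫ σ₁ = i₂ ≫ σ₂)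
    {a₁ : X ⟶ Q₁} {b₁ : Z₁ ⟶ Q₁} (hQ₁ : IsPushout g i₁ a₁ b₁)
    {a₂ : X ⟶ Q₂} {b₂ : Z₂ ⟶ Q₂} (hQ₂ : IsPushout g i₂ a₂ b₂) {x : X ⟶ B} {z : W ⟶ B}
    {u₁ : Q₁ ⟶ B} (ha₁ : a₁ ≫ u₁ = x) (hb₁ : b₁ ≫ u₁ = σ₁ ≫ z)
    {u₂ : Q₂ ⟶ B} (ha₂ : a₂ ≫ u₂ = x) (hb₂ : b₂ ≫ u₂ = σ₂ ≫ z) :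
    K.WeaklyEquivOver (Over.mk u₁) (Over.mk u₂) := by
  -- `Z₁ → M ← Z₂` are trivial cofibrations through `Z₁ ⊔_N Z₂`, and both pushouts compare
  -- to the pushout of `g` along `N → M`
  obtain ⟨P, m₁, m₂, hP, hm₂⟩ := K.po_exists i₁ i₂ hi₁
  obtain ⟨M, iM, σM, hiM, hσM, hfac⟩ := K.C_fac (hP.desc σ₁ σ₂ hc)
  have ht₁ : (m₁ ≫ iM) ≫ σM = σ₁ := by rw [Category.assoc, hfac, hP.inl_desc]
  have ht₂ : (m₂ ≫ iM) ≫ σM = σ₂ := by rw [Category.assoc, hfac, hP.inr_desc]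
  have hc₁ : K.cofib (m₁ ≫ iM) := K.cofib_comp (cofib_inl_of_isPushout hi₂ hP) hiM
  have hc₂ : K.cofib (m₂ ≫ iM) := K.cofib_comp hm₂ hiM
  have hw₁ : K.weq (m₁ ≫ iM) := K.weq_of_comp_left hσM (by rwa [ht₁])
  have hw₂ : K.weq (m₂ ≫ iM) := K.weq_of_comp_left hσM (by rwa [ht₂])
  obtain ⟨QM, bM, aM, hQM, -⟩ := K.po_exists (i₁ ≫ m₁ ≫ iM) g (K.cofib_comp hi₁ hc₁)
  have hw : g ≫ x = (i₁ ≫ m₁ ≫ iM) ≫ σM ≫ z := by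
    rw [← ha₁, ← Category.assoc, hQ₁.w, Category.assoc, hb₁, ← ht₁]
    simp only [Category.assoc]
  set uM : QM ⟶ B := hQM.flip.desc x (σM ≫ z) hw
  have haM : aM ≫ uM = x := hQM.flip.inl_desc _ _ _
  have hbM : bM ≫ uM = σM ≫ z := hQM.flip.inr_desc _ _ _
  have hQM₂ : IsPushout g (i₂ ≫ m₂ ≫ iM) aM bM := by
    rw [← Category.assoc, ← hP.w, Category.assoc]; exact hQM.flip
  refine .trans _ (Over.mk uM) _ (.rel _ _ ?_) (.symm _ _ (.rel _ _ ?_))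
  · exact weqOver_of_isPushout_comp hc₁ hw₁ hQ₁ hQM.flip (ha₁.trans haM.symm)
      (by simp only [hb₁, hbM, ← ht₁, Category.assoc])
  · exact weqOver_of_isPushout_comp hc₂ hw₂ hQ₂ hQM₂ (ha₂.trans haM.symm)
      (by simp only [hb₂, hbM, ← ht₂, Category.assoc])

lemma weaklyEquivOver_of_isPushout_of_weq {B N N' X Z₁ Z₂ W Q₁ Q₂ : C}
    {α : N ⟶ N'} (hα : K.weq α) {g : N' ⟶ X}
    {i₁ : N ⟶ Z₁} (hi₁ : K.cofib i₁) {i₂ : N' ⟶ Z₂} (hi₂ : K.cofib i₂)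
    {σ₁ : Z₁ ⟶ W} (hσ₁ : K.weq σ₁) {σ₂ : Z₂ ⟶ W} (hσ₂ : K.weq σ₂)
    (hc : i₁ ≫ σ₁ = α ≫ i₂ ≫ σ₂)
    {a₁ : X ⟶ Q₁} {b₁ : Z₁ ⟶ Q₁} (hQ₁ : IsPushout (α ≫ g) i₁ a₁ b₁)
    {a₂ : X ⟶ Q₂} {b₂ : Z₂ ⟶ Q₂} (hQ₂ : IsPushout g i₂ a₂ b₂) {x : X ⟶ B} {z : W ⟶ B}
    {u₁ : Q₁ ⟶ B} (ha₁ : a₁ ≫ u₁ = x) (hb₁ : b₁ ≫ u₁ = σ₁ ≫ z)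
    {u₂ : Q₂ ⟶ B} (ha₂ : a₂ ≫ u₂ = x) (hb₂ : b₂ ≫ u₂ = σ₂ ≫ z) :
    K.WeaklyEquivOver (Over.mk u₁) (Over.mk u₂) := by
  -- `Q₁` is also the pushout of `g` along the cofibration `N' → Z₁ ⊔_N N'`
  obtain ⟨R, k₁, k, hR, hk⟩ := K.po_exists i₁ α hi₁
  have hk₁ : K.weq k₁ := (K.po_weq hi₁ hR).1 hα
  set c : R ⟶ Q₁ := hR.desc b₁ (g ≫ a₁) (by rw [← hQ₁.w, Category.assoc])
  have hkc : k ≫ c = g ≫ a₁ := hR.inr_desc _ _ _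
  have hQ₁' : IsPushout g k a₁ c :=
    (IsPushout.of_top (by rw [hR.inl_desc]; exact hQ₁.flip) hkc hR).flip
  set σ : R ⟶ W := hR.desc σ₁ (i₂ ≫ σ₂) hc
  have hσ : K.weq σ := K.weq_of_comp_right hk₁ (by rwa [hR.inl_desc])
  have hcu : c ≫ u₁ = σ ≫ z := by
    apply hR.hom_ext
    · rw [← Category.assoc, hR.inl_desc, hb₁, ← Category.assoc, hR.inl_desc]
    · rw [← Category.assoc, hkc, ← Category.assoc, hR.inr_desc, Category.assoc, ha₁,
        Category.assoc, ← hb₂, ← Category.assoc, ← hQ₂.w, Category.assoc, ha₂]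
  exact weaklyEquivOver_of_isPushout_of_factorizations hk hi₂ hσ hσ₂ (hR.inr_desc _ _ _)
    hQ₁' hQ₂ ha₁ hcu ha₂ hb₂

lemma exists_weqOver_isPushout_comp {B N X X' Z Q : C} {g : N ⟶ X} {i : N ⟶ Z}
    (hi : K.cofib i) {e : X ⟶ X'} (he : K.weq e) {a : X ⟶ Q} {b : Z ⟶ Q}
    (hQ : IsPushout g i a b) {x' : X' ⟶ B} {z : Z ⟶ B} {u : Q ⟶ B}
    (ha : a ≫ u = e ≫ x') (hb : b ≫ u = z) :
    ∃ (Q' : C) (a' : X' ⟶ Q') (b' : Z ⟶ Q') (u' : Q' ⟶ B),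
      IsPushout (g ≫ e) i a' b' ∧ a' ≫ u' = x' ∧ b' ≫ u' = z ∧
        K.WeqOver (Over.mk u) (Over.mk u') := by
  obtain ⟨Q', l, a', hQQ', -⟩ := K.po_exists a e (cofib_inl_of_isPushout hi hQ)
  have hl : K.weq l := (K.po_weq (cofib_inl_of_isPushout hi hQ) hQQ').1 he
  have hQ' : IsPushout (g ≫ e) i a' (b ≫ l) := hQ.paste_horiz hQQ'.flip
  have hw : (g ≫ e) ≫ x' = i ≫ z := by
    rw [Category.assoc, ← ha, ← Category.assoc, hQ.w, Category.assoc, hb]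
  refine ⟨Q', a', b ≫ l, hQ'.desc x' z hw, hQ', hQ'.inl_desc _ _ _, hQ'.inr_desc _ _ _,
    l, hl, (?_ : l ≫ hQ'.desc x' z hw = u)⟩
  apply hQ.hom_ext
  · rw [← Category.assoc, hQQ'.w, Category.assoc, hQ'.inl_desc, ha]
  · rw [← Category.assoc, hQ'.inr_desc, hb]

variable (K)

def IsJoinAlong {A E B J : C} (q : E ⟶ B) (f : A ⟶ B) (j : J ⟶ B) : Prop :=
  ∃ (E' Z : C) (fbar : E' ⟶ E) (pbar : E' ⟶ A) (i : E' ⟶ Z) (σ : Z ⟶ E)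
    (a : A ⟶ J) (bz : Z ⟶ J),
    IsPullback fbar pbar q f ∧ K.cofib i ∧ K.weq σ ∧ i ≫ σ = fbar ∧
    IsPushout pbar i a bz ∧ a ≫ j = f ∧ bz ≫ j = σ ≫ q

lemma exists_join_of_isPullback {A E B E' : C} {q : E ⟶ B} {f : A ⟶ B}
    {fbar : E' ⟶ E} {pbar : E' ⟶ A} (hP : IsPullback fbar pbar q f) :
    ∃ (Z J : C) (i : E' ⟶ Z) (σ : Z ⟶ E) (a : A ⟶ J) (bz : Z ⟶ J) (j : J ⟶ B),
      K.cofib i ∧ K.weq σ ∧ i ≫ σ = fbar ∧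
      IsPushout pbar i a bz ∧ a ≫ j = f ∧ bz ≫ j = σ ≫ q := by
  obtain ⟨Z, i, σ, hi, hσ, hiσ⟩ := K.C_fac fbar
  obtain ⟨J, bz, a, hJ, -⟩ := K.po_exists i pbar hi
  have hw : pbar ≫ f = i ≫ σ ≫ q := by rw [← hP.w, ← hiσ, Category.assoc]
  exact ⟨Z, J, i, σ, a, bz, hJ.flip.desc f (σ ≫ q) hw, hi, hσ, hiσ, hJ.flip,
    hJ.flip.inl_desc _ _ _, hJ.flip.inr_desc _ _ _⟩

variable {K}

lemma isJoin_iff {A Cc B J : C} {f : A ⟶ B} {g : Cc ⟶ B} {j : J ⟶ B} :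
    K.IsJoin f g j ↔ ∃ (E : C) (τ : Cc ⟶ E) (q : E ⟶ B),
      K.weq τ ∧ K.fib q ∧ τ ≫ q = g ∧ K.IsJoinAlong q f j :=
  Iff.rfl

lemma exists_isJoinAlong {A E B : C} {q : E ⟶ B} (hq : K.fib q) (f : A ⟶ B) :
    ∃ (J : C) (j : J ⟶ B), K.IsJoinAlong q f j := by
  obtain ⟨E', fbar, pbar, hP, -⟩ := K.pb_exists q f hq
  obtain ⟨Z, J, i, σ, a, bz, j, hi, hσ, hiσ, hJ, haj, hbj⟩ :=
    K.exists_join_of_isPullback hP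
  exact ⟨J, j, E', Z, fbar, pbar, i, σ, a, bz, hP, hi, hσ, hiσ, hJ, haj, hbj⟩

lemma weaklyEquivOver_of_isJoinAlong_of_weq {A A' E B J J' : C} {q : E ⟶ B} (hq : K.fib q)
    {e : A ⟶ A'} (he : K.weq e) {f : A ⟶ B} {f' : A' ⟶ B} (hef : e ≫ f' = f)
    {j : J ⟶ B} (hj : K.IsJoinAlong q f j) {j' : J' ⟶ B} (hj' : K.IsJoinAlong q f' j') :
    K.WeaklyEquivOver (Over.mk j) (Over.mk j') := by
  obtain ⟨P, Z, fb, pb, i, σ, a, b, hP, hi, hσ, hiσ, hJ, haj, hbj⟩ := hj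
  obtain ⟨P', Z', fb', pb', i', σ', a', b', hP', hi', hσ', hiσ', hJ', haj', hbj'⟩ := hj'
  set w : P ⟶ P' := hP'.lift fb (pb ≫ e) (by rw [Category.assoc, hef, hP.w])
  have hw₂ : w ≫ pb' = pb ≫ e := hP'.lift_snd _ _ _
  -- the comparison of the pullbacks is a base change of `e` along the fibration `pb'`
  have hwP : IsPullback w pb pb' e :=
    IsPullback.of_right (by rwa [hP'.lift_fst, hef]) hw₂ hP'
  have hw : K.weq w := (K.pb_weq (fib_of_isPullback hq hP') hwP).1 he
  obtain ⟨Q, aQ, bQ, uQ, hQ, haQ, hbQ, hjQ⟩ :=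
    exists_weqOver_isPushout_comp hi he hJ (x' := f') (by rw [haj, hef]) hbj
  rw [← hw₂] at hQ
  exact .trans _ _ _ (.rel _ _ hjQ) <| weaklyEquivOver_of_isPushout_of_weq hw hi hi' hσ hσ'
    (by rw [hiσ, hiσ', hP'.lift_fst]) hQ hJ' haQ hbQ haj' hbj'

lemma weaklyEquivOver_of_isJoinAlong {E B : C} {q : E ⟶ B} (hq : K.fib q) {u v : Over B}
    (huv : K.WeaklyEquivOver u v) {J J' : C} {j : J ⟶ B} {j' : J' ⟶ B}
    (hj : K.IsJoinAlong q u.hom j) (hj' : K.IsJoinAlong q v.hom j') :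
    K.WeaklyEquivOver (Over.mk j) (Over.mk j') := by
  induction huv generalizing J J' with
  | rel u v huv =>
      obtain ⟨e, he, hev⟩ := huv
      exact weaklyEquivOver_of_isJoinAlong_of_weq hq he hev hj hj'
  | refl =>
      exact weaklyEquivOver_of_isJoinAlong_of_weq hq (K.weq_id _) (Category.id_comp _) hj hj'
  | symm _ _ _ ih => exact .symm _ _ (ih hj' hj)
  | trans _ v _ _ _ ih₁ ih₂ =>
      obtain ⟨Jv, jv, hjv⟩ := exists_isJoinAlong hq v.hom
      exact .trans _ _ _ (ih₁ hj hjv) (ih₂ hjv hj')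

lemma exists_isJoin_of_weaklyEquivOver {E B J : C} {g : E ⟶ B} {u v : Over B}
    (huv : K.WeaklyEquivOver u v) {j : J ⟶ B} (hj : K.IsJoin u.hom g j) :
    ∃ (J' : C) (j' : J' ⟶ B), K.IsJoin v.hom g j' ∧
      K.WeaklyEquivOver (Over.mk j) (Over.mk j') := by
  obtain ⟨E', τ, q, hτ, hq, hτq, hj⟩ := isJoin_iff.mp hj
  obtain ⟨J', j', hj'⟩ := exists_isJoinAlong hq v.hom
  exact ⟨J', j', isJoin_iff.mpr ⟨E', τ, q, hτ, hq, hτq, hj'⟩,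
    weaklyEquivOver_of_isJoinAlong hq huv hj hj'⟩

end PreJCat

namespace ModelizationFunctor

variable {D : Type u'} [Category.{v'} D] [HasZeroObject D] [HasZeroMorphisms D]
  {J : PreJCat C} {K : PreJCat D} (μ : ModelizationFunctor J K)

lemma map_hasWeakSection {E B : C} {g : E ⟶ B} (h : J.HasWeakSection g) :
    K.HasWeakSection (μ.F.map g) := by
  obtain ⟨E', τ, q, hτ, -, hτq, s, hs⟩ := h
  obtain ⟨E'', τ', q', hτ', hq', hτq'⟩ := K.F_fac (μ.F.map q)
  refine ⟨E'', μ.F.map τ ≫ τ', q', K.weq_comp (μ.map_weq τ hτ) hτ', hq', ?_,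
    μ.F.map s ≫ τ', ?_⟩
  · rw [Category.assoc, hτq', ← μ.F.map_comp, hτq]
  · rw [Category.assoc, hτq', ← μ.F.map_comp, hs, μ.F.map_id]

lemma exists_isJoin_map {A E B J₁ : C} {h : A ⟶ B} {p : E ⟶ B} {j : J₁ ⟶ B}
    (hj : J.IsJoin h p j) :
    ∃ (J₂ : D) (j₂ : J₂ ⟶ μ.F.obj B), K.IsJoin (μ.F.map h) (μ.F.map p) j₂ ∧
      K.WeaklyEquivOver (Over.mk (μ.F.map j)) (Over.mk j₂) := by
  obtain ⟨E₁, τ, q, hτ, hq, hτq, E', Z, fbar, pbar, i, σ, a, bz, hPB, hi, hσ, hiσ,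
    hPO, haj, hbj⟩ := hj
  obtain ⟨-, E₂, τ₂, q₂, hτ₂, hq₂, hτq₂, P, pr₁, pr₂, hP, w, hw, hw₁, hw₂⟩ :=
    μ.map_hpb (J.isHPB_of_isPullback hq hPB)
  obtain ⟨-, Z₁, i₁, σ₁, hi₁, hσ₁, hiσ₁, Q, inl, inr, hQ, w', hw', hwl, hwr⟩ :=
    μ.map_hpo (J.isHPO_of_isPushout hi hPO.flip)
  obtain ⟨Z₂, J₂, i₂, σ₂, a₂, b₂, j₂, hi₂, hσ₂, hiσ₂, hJ₂, haj₂, hbj₂⟩ :=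
    K.exists_join_of_isPullback hP
  refine ⟨J₂, j₂, ⟨E₂, μ.F.map τ ≫ τ₂, q₂, K.weq_comp (μ.map_weq τ hτ) hτ₂, hq₂,
    by rw [Category.assoc, hτq₂, ← μ.F.map_comp, hτq], P, Z₂, pr₁, pr₂, i₂, σ₂, a₂, b₂,
    hP, hi₂, hσ₂, hiσ₂, hJ₂, haj₂, hbj₂⟩, ?_⟩
  -- `μ J₁` receives a weak equivalence from the strict pushout `Q`, which is glued to `J₂`
  refine .trans _ (Over.mk (w' ≫ μ.F.map j)) _ (.symm _ _ (.rel _ _ ⟨w', hw', rfl⟩)) ?_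
  rw [← hw₂] at hQ
  refine PreJCat.weaklyEquivOver_of_isPushout_of_weq hw hi₁ hi₂
    (K.weq_comp hσ₁ (K.weq_comp (μ.map_weq σ hσ) hτ₂)) hσ₂ ?_ hQ.flip hJ₂ ?_ ?_ haj₂ hbj₂
  · rw [hiσ₂, hw₁, ← hiσ, μ.F.map_comp, ← hiσ₁]
    simp only [Category.assoc]
  · rw [← Category.assoc, hwr, ← μ.F.map_comp, haj]
  · rw [← Category.assoc, hwl, Category.assoc, ← μ.F.map_comp, hbj, μ.F.map_comp, ← hτq₂]
    simp only [Category.assoc]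

lemma exists_isIterJoin_map {E B : C} (p : E ⟶ B) {n : ℕ} {X : C} {h : X ⟶ B}
    (hh : J.IsIterJoin p n h) :
    ∃ (Y : D) (g : Y ⟶ μ.F.obj B), K.IsIterJoin (μ.F.map p) n g ∧
      K.WeaklyEquivOver (Over.mk (μ.F.map h)) (Over.mk g) := by
  induction hh with
  | zero => exact ⟨_, μ.F.map p, .zero, .refl _⟩
  | succ _ hj ih =>
      obtain ⟨Y, g, hg, hhg⟩ := ih
      obtain ⟨J₂, j₂, hj₂, hjj₂⟩ := μ.exists_isJoin_map hj
      obtain ⟨J₃, j₃, hj₃, hj₂j₃⟩ := PreJCat.exists_isJoin_of_weaklyEquivOver hhg hj₂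
      exact ⟨J₃, j₃, .succ hg hj₃, .trans _ _ _ hjj₂ hj₂j₃⟩

end ModelizationFunctor

theorem Gsecat_map_le_general {D : Type u'} [Category.{v'} D] [HasZeroObject D]
    [HasZeroMorphisms D]
    (J : JCat C) (K : JCat D)
    (hd : ∀ X : D, K.toPreJCat.CofModel X)
    (μ : ModelizationFunctor J.toPreJCat K.toPreJCat)
    {E B : C} (p : E ⟶ B) :
    K.toPreJCat.Gsecat (μ.F.map p) ≤ J.toPreJCat.Gsecat p := by
  apply sInf_le_sInf
  rintro n ⟨m, rfl, X, h, hh, hsec⟩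
  obtain ⟨Y, g, hg, hhg⟩ := μ.exists_isIterJoin_map p hh
  exact ⟨m, rfl, Y, g, hg,
    (PreJCat.hasWeakSection_iff_of_weaklyEquivOver hd hhg).mp (μ.map_hasWeakSection hsec)⟩

/-- For a modelization functor `μ` between J-categories,
`secat (μ p) ≤ secat p`. -/
theorem Gsecat_map_le {D : Type u'} [Category.{v'} D] [HasZeroObject D]
    [HasZeroMorphisms D]
    (J : JCat C) (K : JCat D)
    (hc : ∀ X : C, J.toPreJCat.CofModel X)
    (hd : ∀ X : D, K.toPreJCat.CofModel X)
    (μ : ModelizationFunctor J.toPreJCat K.toPreJCat)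
    {E B : C} (p : E ⟶ B) :
    K.toPreJCat.Gsecat (μ.F.map p) ≤ J.toPreJCat.Gsecat p :=
  Gsecat_map_le_general J K hd μ p
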